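/- Let S be a complete RN module over ℝ with base (Ω, F, P) and suppose Rank_E(S) ≥ 2 for some E ∈ F̃ with E ⊂ H(S) and P(E) > 0. Then there exists a unique G ∈ F̃ with E ⊂ G ⊂ H(S) and P(G) > 0 such that Rank_G(S) ≥ 2 and Rank_D(S) < 2 for every D ∈ F̃ with D ⊂ H(S)\G and P(D) > 0. -/

import Mathlib

/-!
`G` is an a.e.-largest set `D ⊆ H` with `Rank_D(S) ≥ 2`. Such a set exists because the family of
these `D` is closed under countable unions: after disjointing, independent pairs on the pieces
`Fₙ` can be concatenated into one pair, since the partial sums of `∑ₙ I_{Fₙ} zₙ` differ only on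
the tails `⋃_{i ≥ n} Fᵢ`, whose measures tend to `0`, and hence converge by completeness.
Maximality puts `E` inside `G` and gives uniqueness: if `G'` is another such set, then `G \ G'`
has rank `≥ 2` (rank passes to subsets) but lies in `H \ G'`, so it is null, and symmetrically.
-/

open MeasureTheory Filter Set

noncomputable section

namespace RNM

variable {Ω : Type*} [MeasurableSpace Ω]

/-- `L⁰(F, ℝ)`: equivalence classes of real random variables mod a.e. equality. -/
abbrev L0 (μ : Measure Ω) : Type _ := Ω →ₘ[μ] ℝ

open Classical in
/-- The equivalence class of the indicator function of a (measurable) set. -/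
noncomputable def ind (μ : Measure Ω) (A : Set Ω) : L0 μ :=
  if h : MeasurableSet A then
    AEEqFun.mk (A.indicator fun _ => (1 : ℝ)) (aestronglyMeasurable_const.indicator h)
  else 0

/-- The constant function, as an element of `L⁰`. -/
noncomputable def cst (μ : Measure Ω) (r : ℝ) : L0 μ := AEEqFun.const Ω r

/-- `A ⊂ B` modulo null sets. -/
def aeSub (μ : Measure Ω) (A B : Set Ω) : Prop := μ (A \ B) = 0

/-- `A = B` modulo null sets. -/
def aeEqS (μ : Measure Ω) (A B : Set Ω) : Prop := μ ((A \ B) ∪ (B \ A)) = 0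

variable {μ : Measure Ω} {S : Type*} [AddCommGroup S]

/-- The axioms of a random normed module over ℝ with base `(Ω, F, μ)`: `S` is a left module
over the algebra `L⁰(F,ℝ)` (with module multiplication `sm`) and `nrm` is an `L⁰`-norm. -/
structure IsRNModule (μ : Measure Ω) (sm : L0 μ → S → S) (nrm : S → L0 μ) : Prop where
  smul_add : ∀ ξ x y, sm ξ (x + y) = sm ξ x + sm ξ y
  add_smul : ∀ ξ η x, sm (ξ + η) x = sm ξ x + sm η x
  mul_smul : ∀ ξ η x, sm (ξ * η) x = sm ξ (sm η x)
  one_smul : ∀ x, sm 1 x = x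
  nrm_nonneg : ∀ x, 0 ≤ nrm x
  nrm_smul : ∀ ξ x, nrm (sm ξ x) = |ξ| * nrm x
  nrm_add : ∀ x y, nrm (x + y) ≤ nrm x + nrm y
  nrm_eq_zero : ∀ x, nrm x = 0 → x = 0

/-- `x` and `y` are `L⁰`-independent on `F`. -/
def Indep (sm : L0 μ → S → S) (x y : S) (F : Set Ω) : Prop :=
  ∀ ξ η : L0 μ, sm (ξ * ind μ F) x + sm (η * ind μ F) y = 0 →
    ξ * ind μ F = 0 ∧ η * ind μ F = 0

/-- `Rank_D(S) ≥ 2`. -/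
def RankGe2 (sm : L0 μ → S → S) (D : Set Ω) : Prop := ∃ x y : S, Indep sm x y D

/-- `A_x = [‖x‖ > 0]`. -/
def Aset (nrm : S → L0 μ) (x : S) : Set Ω := {ω | 0 < (nrm x) ω}

/-- `A_{xy} = A_x ∩ A_y`. -/
def Axy (nrm : S → L0 μ) (x y : S) : Set Ω := Aset nrm x ∩ Aset nrm y

/-- `B_{xy} = A_{xy} ∩ A_{x-y}`. -/
def Bxy (nrm : S → L0 μ) (x y : S) : Set Ω := Axy nrm x y ∩ Aset nrm (x - y)

/-- `H` is (a representative of) the support `H(S) = [⋁{‖x‖ : x ∈ S} > 0]`. -/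
def IsSupport (nrm : S → L0 μ) (H : Set Ω) : Prop :=
  MeasurableSet H ∧ (∀ x : S, aeSub μ (Aset nrm x) H) ∧
    ∀ B : Set Ω, MeasurableSet B → aeSub μ B H → 0 < μ B →
      ∃ x : S, 0 < μ (B ∩ Aset nrm x)

/-- A sequence in `S` is Cauchy for the topology of convergence in probability. -/
def CauchyInProb (μ : Measure Ω) (nrm : S → L0 μ) (u : ℕ → S) : Prop :=
  ∀ ε : ℝ, 0 < ε →
    Tendsto (fun p : ℕ × ℕ => μ {ω | ε ≤ |(nrm (u p.1 - u p.2)) ω|}) atTop (nhds 0)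

/-- `u n → x` in probability (i.e. `‖u n - x‖ → 0` in probability). -/
def TendstoInProb (μ : Measure Ω) (nrm : S → L0 μ) (u : ℕ → S) (x : S) : Prop :=
  ∀ ε : ℝ, 0 < ε →
    Tendsto (fun n => μ {ω | ε ≤ |(nrm (u n - x)) ω|}) atTop (nhds 0)

/-- Completeness of a random normed module. -/
def CompleteRN (μ : Measure Ω) (nrm : S → L0 μ) : Prop :=
  ∀ u : ℕ → S, CauchyInProb μ nrm u → ∃ x : S, TendstoInProb μ nrm u x

/-- The random unit sphere `S(1)`. -/
def sphere (nrm : S → L0 μ) : Set S :=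
  {x | ∃ A : Set Ω, MeasurableSet A ∧ 0 < μ A ∧ nrm x = ind μ A}

/-- The random closed unit ball `U(1)`. -/
def ball (nrm : S → L0 μ) : Set S := {x | nrm x ≤ 1}

/-- `ε` is an admissible random convexity parameter on `D`: `ε ≥ 0` and `0 < ε ≤ 2` on `D`. -/
def Admissible (μ : Measure Ω) (D : Set Ω) (ε : L0 μ) : Prop :=
  0 ≤ ε ∧ ∀ᵐ ω ∂μ, ω ∈ D → 0 < ε ω ∧ ε ω ≤ 2

/-- midpoint `(x+y)/2`. -/
def mid (μ : Measure Ω) (sm : L0 μ → S → S) (x y : S) : S := sm (cst μ (1/2)) (x + y)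

/-- The set whose infimum (in the a.s. order of `L⁰`) is the modulus of random
convexity `δ_D(ε)`. -/
def modSet (μ : Measure Ω) (sm : L0 μ → S → S) (nrm : S → L0 μ) (D : Set Ω) (ε : L0 μ) :
    Set (L0 μ) :=
  {z | ∃ x ∈ sphere nrm, ∃ y ∈ sphere nrm, aeSub μ D (Bxy nrm x y) ∧
    ε * ind μ D ≤ ind μ D * nrm (x - y) ∧
    z = ind μ D - ind μ D * nrm (mid μ sm x y)}

/-- `S` is random uniformly convex: `δ_{H(S)}(ε) > 0` on `H(S)` for every admissible `ε`. -/
def RandomUniformlyConvex (μ : Measure Ω) (sm : L0 μ → S → S) (nrm : S → L0 μ)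
    (H : Set Ω) : Prop :=
  ∀ ε : L0 μ, Admissible μ H ε → ∀ d : L0 μ, IsGLB (modSet μ sm nrm H ε) d →
    ∀ᵐ ω ∂μ, ω ∈ H → 0 < d ω

/-- `G` is (a representative of) `G(S)`. -/
def IsGSet (μ : Measure Ω) (sm : L0 μ → S → S) (H G : Set Ω) : Prop :=
  MeasurableSet G ∧ aeSub μ G H ∧ 0 < μ G ∧ RankGe2 sm G ∧
    ∀ D : Set Ω, MeasurableSet D → aeSub μ D (H \ G) → 0 < μ D → ¬ RankGe2 sm D


/-- The properties demanded of `G = G(S)` in Proposition 2.2(2) (relative to `E`). -/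
def GSProp (μ : Measure Ω) (sm : L0 μ → S → S) (H E G : Set Ω) : Prop :=
  MeasurableSet G ∧ aeSub μ E G ∧ aeSub μ G H ∧ 0 < μ G ∧ RankGe2 sm G ∧
    ∀ D : Set Ω, MeasurableSet D → aeSub μ D (H \ G) → 0 < μ D → ¬ RankGe2 sm D
lemma coeFn_ind {A : Set Ω} (hA : MeasurableSet A) :
    (ind μ A : Ω → ℝ) =ᵐ[μ] A.indicator 1 := by
  rw [ind, dif_pos hA]
  exact AEEqFun.coeFn_mk _ _

lemma ind_mul_ind {A B : Set Ω} (hA : MeasurableSet A) (hB : MeasurableSet B) :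
    ind μ A * ind μ B = ind μ (A ∩ B) := by
  refine AEEqFun.ext ?_
  filter_upwards [AEEqFun.coeFn_mul (ind μ A) (ind μ B), coeFn_ind hA, coeFn_ind hB,
    coeFn_ind (hA.inter hB)] with ω hmul hIA hIB hIAB
  simp only [hmul, Pi.mul_apply, hIA, hIB, hIAB]
  by_cases ha : ω ∈ A <;> by_cases hb : ω ∈ B <;> simp [ha, hb]

lemma ind_empty : ind μ (∅ : Set Ω) = 0 := by
  refine AEEqFun.ext ?_
  filter_upwards [coeFn_ind (μ := μ) MeasurableSet.empty, AEEqFun.coeFn_zero (β := ℝ)]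
    with ω hI h0
  simp [hI, h0]

lemma ind_mul_of_aeSub {A B : Set Ω} (hA : MeasurableSet A) (hB : MeasurableSet B)
    (h : aeSub μ A B) : ind μ A * ind μ B = ind μ A := by
  refine AEEqFun.ext ?_
  filter_upwards [AEEqFun.coeFn_mul (ind μ A) (ind μ B), coeFn_ind hA, coeFn_ind hB,
    ae_le_set.mpr h] with ω hmul hIA hIB hAB
  simp only [hmul, Pi.mul_apply, hIA, hIB]
  by_cases ha : ω ∈ A
  · have hb : ω ∈ B := hAB ha
    simp [ha, hb]
  · simp [ha]

lemma mul_ind_eq_zero_iff {ξ : L0 μ} {A : Set Ω} (hA : MeasurableSet A) :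
    ξ * ind μ A = 0 ↔ ∀ᵐ ω ∂μ, ω ∈ A → ξ ω = 0 := by
  rw [AEEqFun.ext_iff]
  refine eventually_congr ?_
  filter_upwards [AEEqFun.coeFn_mul ξ (ind μ A), coeFn_ind hA, AEEqFun.coeFn_zero (β := ℝ)]
    with ω hmul hI h0
  simp only [hmul, Pi.mul_apply, hI, h0, Pi.zero_apply]
  by_cases ha : ω ∈ A <;> simp [ha]

lemma mul_ind_iUnion_eq_zero {ξ : L0 μ} {F : ℕ → Set Ω} (hF : ∀ n, MeasurableSet (F n))
    (h : ∀ n, ξ * ind μ (F n) = 0) : ξ * ind μ (⋃ n, F n) = 0 := by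
  rw [mul_ind_eq_zero_iff (MeasurableSet.iUnion hF)]
  filter_upwards [ae_all_iff.mpr fun n => (mul_ind_eq_zero_iff (hF n)).mp (h n)] with ω hω hU
  obtain ⟨n, hn⟩ := Set.mem_iUnion.mp hU
  exact hω n hn

lemma aeSub_of_subset {A B : Set Ω} (h : A ⊆ B) : aeSub μ A B := by
  rw [aeSub, Set.sdiff_eq_empty.mpr h, measure_empty]

lemma exists_ae_maximal_of_iUnion_mem [IsFiniteMeasure μ] {C : Set (Set Ω)}
    (hC : ∀ D ∈ C, MeasurableSet D) (hCU : ∀ D : ℕ → Set Ω, (∀ n, D n ∈ C) → ⋃ n, D n ∈ C)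
    (hne : C.Nonempty) : ∃ G ∈ C, ∀ D ∈ C, μ (D \ G) = 0 := by
  obtain ⟨m, -, hm, hmC⟩ := exists_seq_tendsto_sSup (hne.image μ) (OrderTop.bddAbove _)
  choose D hDC hDm using hmC
  have hGC : ⋃ n, D n ∈ C := hCU D hDC
  have hGmax : sSup (μ '' C) ≤ μ (⋃ n, D n) :=
    le_of_tendsto' hm fun n => hDm n ▸ measure_mono (Set.subset_iUnion D n)
  refine ⟨⋃ n, D n, hGC, fun D' hD' => ?_⟩
  have hunion : D' ∪ ⋃ n, D n ∈ C := by
    have hcons : D' ∪ ⋃ n, D n = ⋃ n, (Nat.casesOn n D' D : Set Ω) :=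
      Set.union_iUnion_nat_succ (fun n => (Nat.casesOn n D' D : Set Ω))
    rw [hcons]
    exact hCU _ fun n => by cases n <;> simp [hD', hDC]
  have hle : μ (D' ∪ ⋃ n, D n) ≤ μ (⋃ n, D n) :=
    (le_sSup (Set.mem_image_of_mem μ hunion)).trans hGmax
  rw [← Set.union_sdiff_right, measure_sdiff Set.subset_union_right
    (hC _ hGC).nullMeasurableSet (measure_ne_top μ _)]
  exact tsub_eq_zero_of_le hle

namespace IsRNModule

variable {sm : L0 μ → S → S} {nrm : S → L0 μ}

lemma smul_zero (hRN : IsRNModule μ sm nrm) (ξ : L0 μ) : sm ξ (0 : S) = 0 := by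
  have h := hRN.smul_add ξ 0 0
  rwa [add_zero, left_eq_add] at h

lemma zero_smul (hRN : IsRNModule μ sm nrm) (x : S) : sm 0 x = 0 := by
  have h := hRN.add_smul 0 0 x
  rwa [add_zero, left_eq_add] at h

lemma smul_sub (hRN : IsRNModule μ sm nrm) (ξ : L0 μ) (x y : S) :
    sm ξ (x - y) = sm ξ x - sm ξ y := by
  rw [eq_sub_iff_add_eq, ← hRN.smul_add, sub_add_cancel]

lemma smul_sum (hRN : IsRNModule μ sm nrm) (ξ : L0 μ) {ι : Type*} (s : Finset ι) (g : ι → S) :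
    sm ξ (∑ i ∈ s, g i) = ∑ i ∈ s, sm ξ (g i) :=
  map_sum (AddMonoidHom.mk' (sm ξ) (hRN.smul_add ξ)) g s

lemma nrm_ind_smul (hRN : IsRNModule μ sm nrm) {A : Set Ω} (hA : MeasurableSet A) (w : S) :
    nrm (sm (ind μ A) w) =ᵐ[μ] A.indicator (nrm w) := by
  rw [hRN.nrm_smul]
  filter_upwards [AEEqFun.coeFn_mul |ind μ A| (nrm w), AEEqFun.coeFn_abs (ind μ A),
    coeFn_ind hA] with ω hmul habs hI
  simp only [hmul, Pi.mul_apply, habs, hI]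
  by_cases ha : ω ∈ A <;> simp [ha]

lemma measure_abs_nrm_ge_le_of_ind_smul_eq (hRN : IsRNModule μ sm nrm) {A : Set Ω}
    (hA : MeasurableSet A) {w : S} (hw : sm (ind μ A) w = w) {ε : ℝ} (hε : 0 < ε) :
    μ {ω | ε ≤ |nrm w ω|} ≤ μ A := by
  have hsupp := hRN.nrm_ind_smul hA w
  rw [hw] at hsupp
  refine measure_mono_ae ?_
  filter_upwards [hsupp] with ω hω (hle : ε ≤ |nrm w ω|)
  by_contra ha
  rw [hω, Set.indicator_of_notMem ha, abs_zero] at hle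
  exact hle.not_gt hε

lemma cauchyInProb_of_ind_smul_eq (hRN : IsRNModule μ sm nrm) {u : ℕ → S} {T : ℕ → Set Ω}
    (hT : ∀ n, MeasurableSet (T n)) (hT0 : Tendsto (fun n => μ (T n)) atTop (nhds 0))
    (hu : ∀ M N, sm (ind μ (T (min M N))) (u M - u N) = u M - u N) :
    CauchyInProb μ nrm u := by
  intro ε hε
  have hmin : Tendsto (fun p : ℕ × ℕ => min p.1 p.2) atTop atTop :=
    tendsto_atTop_atTop_of_monotone (fun _ _ h => min_le_min h.1 h.2) fun n =>
      ⟨(n, n), (min_self n).ge⟩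
  refine tendsto_of_tendsto_of_tendsto_of_le_of_le tendsto_const_nhds (hT0.comp hmin)
    (fun _ => zero_le) fun p => ?_
  exact hRN.measure_abs_nrm_ge_le_of_ind_smul_eq (hT _) (hu p.1 p.2) hε

lemma eq_zero_of_tendstoInProb (hRN : IsRNModule μ sm nrm) {u : ℕ → S} {x a : S}
    (hu : TendstoInProb μ nrm u x)
    (ha : ∀ᶠ N in atTop, ∀ᵐ ω ∂μ, |nrm a ω| ≤ |nrm (u N - x) ω|) : a = 0 := by
  have hsmall : ∀ ε : ℝ, 0 < ε → ∀ᵐ ω ∂μ, |nrm a ω| < ε := by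
    intro ε hε
    have hnull : μ {ω | ε ≤ |nrm a ω|} = 0 := by
      refine le_antisymm (ge_of_tendsto (hu ε hε) ?_) zero_le
      filter_upwards [ha] with N hN
      exact measure_mono_ae (hN.mono fun ω hle hmem => le_trans hmem hle)
    filter_upwards [measure_eq_zero_iff_ae_notMem.mp hnull] with ω hω
    exact not_le.mp hω
  refine hRN.nrm_eq_zero a (AEEqFun.ext ?_)
  filter_upwards [ae_all_iff.mpr fun k : ℕ => hsmall (1 / (k + 1)) Nat.one_div_pos_of_nat,
    AEEqFun.coeFn_zero (β := ℝ)] with ω hω h0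
  rw [h0, Pi.zero_apply]
  by_contra hne
  obtain ⟨k, hk⟩ := exists_nat_one_div_lt (abs_pos.mpr hne)
  exact (hω k).not_gt hk

lemma ind_smul_ind_smul (hRN : IsRNModule μ sm nrm) {A B : Set Ω} (hA : MeasurableSet A)
    (hB : MeasurableSet B) (w : S) :
    sm (ind μ A) (sm (ind μ B) w) = sm (ind μ (A ∩ B)) w := by
  rw [← hRN.mul_smul, ind_mul_ind hA hB]

lemma exists_ind_smul_eq_of_pairwise_disjoint (hRN : IsRNModule μ sm nrm)
    (hcomp : CompleteRN μ nrm) [IsFiniteMeasure μ] {F : ℕ → Set Ω}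
    (hF : ∀ n, MeasurableSet (F n)) (hd : Pairwise fun m n => Disjoint (F m) (F n)) (z : ℕ → S) :
    ∃ x : S, ∀ n, sm (ind μ (F n)) x = sm (ind μ (F n)) (z n) := by
  set v : ℕ → S := fun n => sm (ind μ (F n)) (z n)
  set u : ℕ → S := fun N => ∑ n ∈ Finset.range N, v n
  set T : ℕ → Set Ω := fun M => ⋃ i ≥ M, F i
  have hT : ∀ M, MeasurableSet (T M) := fun M =>
    MeasurableSet.iUnion fun i => MeasurableSet.iUnion fun _ => hF i
  have htail : ∀ K M, K ≤ M → sm (ind μ (T K)) (u M - u K) = u M - u K := by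
    intro K M hKM
    rw [← Finset.sum_Ico_eq_sub v hKM, hRN.smul_sum]
    refine Finset.sum_congr rfl fun n hn => ?_
    have hFT : F n ⊆ T K := Set.subset_biUnion_of_mem (Finset.mem_Ico.mp hn).1
    rw [hRN.ind_smul_ind_smul (hT K) (hF n), Set.inter_eq_right.mpr hFT]
  have hcauchy : CauchyInProb μ nrm u := by
    refine hRN.cauchyInProb_of_ind_smul_eq hT
      (tendsto_measure_biUnion_Ici_zero_of_pairwise_disjoint
        (fun n => (hF n).nullMeasurableSet) hd) fun M N => ?_
    rw [← sub_sub_sub_cancel_right (u M) (u N) (u (min M N)), hRN.smul_sub,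
      htail _ _ (min_le_left M N), htail _ _ (min_le_right M N)]
  have hlocal : ∀ j N, j < N → sm (ind μ (F j)) (u N) = sm (ind μ (F j)) (z j) := by
    intro j N hjN
    rw [hRN.smul_sum, Finset.sum_eq_single_of_mem j (Finset.mem_range.mpr hjN)]
    · rw [hRN.ind_smul_ind_smul (hF j) (hF j), Set.inter_self]
    · intro n _ hnj
      rw [hRN.ind_smul_ind_smul (hF j) (hF n), (hd hnj.symm).inter_eq, ind_empty,
        hRN.zero_smul]
  obtain ⟨x, hx⟩ := hcomp u hcauchy
  refine ⟨x, fun j => (sub_eq_zero.mp (hRN.eq_zero_of_tendstoInProb hx ?_)).symm⟩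
  filter_upwards [eventually_gt_atTop j] with N hjN
  rw [← hlocal j N hjN, ← hRN.smul_sub]
  filter_upwards [hRN.nrm_ind_smul (hF j) (u N - x)] with ω hω
  rw [hω]
  by_cases hj : ω ∈ F j <;> simp [hj]

end IsRNModule

section Rank

variable {sm : L0 μ → S → S} {nrm : S → L0 μ}

lemma Indep.mono {x y : S} {D D' : Set Ω} (hD : MeasurableSet D) (hD' : MeasurableSet D')
    (hsub : aeSub μ D' D) (h : Indep sm x y D) : Indep sm x y D' := by
  have hI : ind μ D' * ind μ D = ind μ D' := ind_mul_of_aeSub hD' hD hsub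
  intro ξ η h0
  have := h (ξ * ind μ D') (η * ind μ D') (by rwa [mul_assoc, mul_assoc, hI])
  rwa [mul_assoc, mul_assoc, hI] at this

lemma Indep.of_ind_smul_eq (hRN : IsRNModule μ sm nrm) {x y x' y' : S} {F : Set Ω}
    (h : Indep sm x y F) (hx : sm (ind μ F) x' = sm (ind μ F) x)
    (hy : sm (ind μ F) y' = sm (ind μ F) y) : Indep sm x' y' F := by
  intro ξ η h0
  apply h
  rwa [hRN.mul_smul, hRN.mul_smul, ← hx, ← hy, ← hRN.mul_smul, ← hRN.mul_smul]

lemma Indep.iUnion (hRN : IsRNModule μ sm nrm) {x y : S} {F : ℕ → Set Ω}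
    (hF : ∀ n, MeasurableSet (F n)) (h : ∀ n, Indep sm x y (F n)) :
    Indep sm x y (⋃ n, F n) := by
  intro ξ η h0
  have hloc : ∀ n, ξ * ind μ (F n) = 0 ∧ η * ind μ (F n) = 0 := by
    intro n
    have hI : ∀ ζ : L0 μ, ind μ (F n) * (ζ * ind μ (⋃ n, F n)) = ζ * ind μ (F n) := by
      intro ζ
      rw [mul_left_comm, ind_mul_of_aeSub (hF n) (MeasurableSet.iUnion hF)
        (aeSub_of_subset (Set.subset_iUnion F n))]
    apply h n
    have := congrArg (sm (ind μ (F n))) h0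
    rwa [hRN.smul_add, ← hRN.mul_smul, ← hRN.mul_smul, hI, hI, hRN.smul_zero] at this
  exact ⟨mul_ind_iUnion_eq_zero hF fun n => (hloc n).1,
    mul_ind_iUnion_eq_zero hF fun n => (hloc n).2⟩

lemma rankGe2_iUnion (hRN : IsRNModule μ sm nrm) (hcomp : CompleteRN μ nrm) [IsFiniteMeasure μ]
    {F : ℕ → Set Ω} (hF : ∀ n, MeasurableSet (F n)) (h : ∀ n, RankGe2 sm (F n)) :
    RankGe2 sm (⋃ n, F n) := by
  choose x y hxy using h
  have hF' : ∀ n, MeasurableSet (disjointed F n) := MeasurableSet.disjointed hF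
  obtain ⟨X, hX⟩ := hRN.exists_ind_smul_eq_of_pairwise_disjoint hcomp hF'
    (disjoint_disjointed F) x
  obtain ⟨Y, hY⟩ := hRN.exists_ind_smul_eq_of_pairwise_disjoint hcomp hF'
    (disjoint_disjointed F) y
  refine ⟨X, Y, ?_⟩
  rw [← iUnion_disjointed]
  refine Indep.iUnion hRN hF' fun n => ?_
  exact ((hxy n).mono (hF n) (hF' n) (aeSub_of_subset (disjointed_le F n))).of_ind_smul_eq
    hRN (hX n) (hY n)

lemma measure_diff_eq_zero_of_rankGe2 {H A B : Set Ω} (hA : MeasurableSet A)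
    (hB : MeasurableSet B) (hAH : aeSub μ A H) (hArk : RankGe2 sm A)
    (hBrk : ∀ D : Set Ω, MeasurableSet D → aeSub μ D (H \ B) → 0 < μ D → ¬ RankGe2 sm D) :
    μ (A \ B) = 0 := by
  by_contra hpos
  obtain ⟨x, y, hxy⟩ := hArk
  refine hBrk (A \ B) (hA.diff hB) ?_ (pos_iff_ne_zero.mpr hpos)
    ⟨x, y, hxy.mono hA (hA.diff hB) (aeSub_of_subset Set.sdiff_subset)⟩
  refine measure_mono_null (fun ω hω => ?_) hAH
  exact ⟨hω.1.1, fun hH => hω.2 ⟨hH, hω.1.2⟩⟩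

end Rank

theorem exists_unique_GSet_general {Ω : Type*} [MeasurableSpace Ω] (μ : Measure Ω)
    [IsProbabilityMeasure μ] {S : Type*} [AddCommGroup S]
    (sm : L0 μ → S → S) (nrm : S → L0 μ) (hRN : IsRNModule μ sm nrm)
    (hcomp : CompleteRN μ nrm) (H : Set Ω)
    (E : Set Ω) (hEm : MeasurableSet E) (hEH : aeSub μ E H) (hEpos : 0 < μ E)
    (hrk : RankGe2 sm E) :
    ∃ G : Set Ω, GSProp μ sm H E G ∧ ∀ G' : Set Ω, GSProp μ sm H E G' → aeEqS μ G G' := by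
  set C : Set (Set Ω) := {D | MeasurableSet D ∧ aeSub μ D H ∧ RankGe2 sm D}
  have hEC : E ∈ C := ⟨hEm, hEH, hrk⟩
  have hCU : ∀ D : ℕ → Set Ω, (∀ n, D n ∈ C) → ⋃ n, D n ∈ C := fun D hD =>
    ⟨MeasurableSet.iUnion fun n => (hD n).1,
      by rw [aeSub, Set.iUnion_sdiff]; exact measure_iUnion_null fun n => (hD n).2.1,
      rankGe2_iUnion hRN hcomp (fun n => (hD n).1) fun n => (hD n).2.2⟩
  obtain ⟨G, ⟨hGm, hGH, hGrk⟩, hGmax⟩ :=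
    exists_ae_maximal_of_iUnion_mem (μ := μ) (fun D hD => hD.1) hCU ⟨E, hEC⟩
  have hEG : aeSub μ E G := hGmax E hEC
  have hGrank : ∀ D : Set Ω, MeasurableSet D → aeSub μ D (H \ G) → 0 < μ D →
      ¬ RankGe2 sm D := by
    intro D hDm hDHG hDpos hDrk
    have hDH : aeSub μ D H :=
      measure_mono_null (Set.sdiff_subset_sdiff_right Set.sdiff_subset) hDHG
    have hDG : μ (D \ G) = 0 := hGmax D ⟨hDm, hDH, hDrk⟩
    refine hDpos.ne' (measure_mono_null (fun ω hω => ?_) (measure_union_null hDHG hDG))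
    by_cases hωG : ω ∈ G
    · exact Or.inl ⟨hω, fun h => h.2 hωG⟩
    · exact Or.inr ⟨hω, hωG⟩
  refine ⟨G, ⟨hGm, hEG, hGH, hEpos.trans_le (measure_mono_ae (ae_le_set.mpr hEG)), hGrk,
    hGrank⟩, fun G' ⟨hG'm, _, hG'H, _, hG'rk, hG'rank⟩ => ?_⟩
  exact measure_union_null (measure_diff_eq_zero_of_rankGe2 hGm hG'm hGH hGrk hG'rank)
    (measure_diff_eq_zero_of_rankGe2 hG'm hGm hG'H hG'rk hGrank)

/-- **Proposition 2.2(2).** If `Rank_E(S) ≥ 2` for some positive-probability `E ⊂ H(S)`,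
then there is a unique (mod null sets) `G` with `E ⊂ G ⊂ H(S)`, `P(G) > 0`,
`Rank_G(S) ≥ 2`, and `Rank_D(S) < 2` for every positive-probability `D ⊂ H(S) \ G`. -/
theorem exists_unique_GSet {Ω : Type*} [MeasurableSpace Ω] (μ : Measure Ω)
    [IsProbabilityMeasure μ] {S : Type*} [AddCommGroup S]
    (sm : L0 μ → S → S) (nrm : S → L0 μ) (hRN : IsRNModule μ sm nrm)
    (hcomp : CompleteRN μ nrm) (H : Set Ω) (hH : IsSupport nrm H)
    (E : Set Ω) (hEm : MeasurableSet E) (hEH : aeSub μ E H) (hEpos : 0 < μ E)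
    (hrk : RankGe2 sm E) :
    ∃ G : Set Ω, GSProp μ sm H E G ∧ ∀ G' : Set Ω, GSProp μ sm H E G' → aeEqS μ G G' :=
  exists_unique_GSet_general μ sm nrm hRN hcomp H E hEm hEH hEpos hrk

end RNM
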